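/- Assume (V1) and (V2), and let w be the unique positive radial H¹ solution, i.e. w ∈ C([0,∞)) ∩ C²((0,∞)), differentiable at 0, w'' + ((N−1)/r)w' − V(r)w + w·log w² = 0 and w > 0 on (0,∞), w'(0) = 0, and ∫_0^∞ r^{N−1}(w'(r)² + w(r)²) dr < ∞. Suppose ψ ∈ C¹([0,∞)) ∩ C²((0,∞)) satisfies ψ'(0) = 0, ψ'' + ((N−1)/r)ψ' − V(r)ψ + (log w(r)² + 2)ψ = 0 on (0,∞), and ∫_0^∞ r^{N−1}(ψ'(r)² + ψ(r)²) dr < ∞. Then ∫_0^∞ r^{N−1}ψ(r)w(r) dr = 0. -/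

import Mathlib

/-!
The weighted Wronskian `W = r^(N-1) (ψ w' - w ψ')` of the two radial equations satisfies
`W' = 2 r^(N-1) ψ w`, because their potentials `V - log w²` and `V - log w² - 2` differ by the
constant `2`. Hence `2 ∫₀^∞ r^(N-1) ψ w = W(∞) - W(0⁺)`, and both limits vanish: at `∞` because
`W` and `W'` are integrable, at `0` because `W` has a limit there while `W² ≤ C r e(r)` with `e`
the integrable `H¹` density, so a nonzero limit would make `1/r` integrable near `0`.
-/

open Real Filter Set MeasureTheory

noncomputable section

/-- Condition (V1): `V` is `C²` on `(0,∞)`, `r^{N-1}|V(r)|^q` is integrable near `0`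
for some `q > N`, and `liminf_{r→∞} V(r)/log r > 1 - N` (possibly `+∞`). -/
def CondV1 (N : ℕ) (V : ℝ → ℝ) : Prop :=
  ContDiffOn ℝ 2 V (Set.Ioi 0) ∧
  (∃ q : ℝ, (N : ℝ) < q ∧
    MeasureTheory.IntegrableOn (fun r : ℝ => r ^ (N - 1) * |V r| ^ q) (Set.Ioc 0 1)) ∧
  (∃ c : ℝ, 1 - (N : ℝ) < c ∧ ∀ᶠ r : ℝ in Filter.atTop, c ≤ V r / Real.log r)

/-- The function `G(r) = V(r) + (N-1)(N-3)/(4r²) + (N-1) log r`. -/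
def Gfun (N : ℕ) (V : ℝ → ℝ) : ℝ → ℝ := fun r =>
  V r + ((N : ℝ) - 1) * ((N : ℝ) - 3) / (4 * r ^ 2) + ((N : ℝ) - 1) * Real.log r

/-- Condition (V2): if `N = 2` or `3`, `G' > 0` on `(0,∞)` and `liminf_{r→0⁺} G'(r) > 0`;
if `N ≥ 4`, `limsup_{r→0⁺} r³G'(r) < 0` and `r³G'(r)` has a unique zero in `(0,∞)`,
which is simple. -/
def CondV2 (N : ℕ) (V : ℝ → ℝ) : Prop :=
  ((N = 2 ∨ N = 3) →
    (∀ r : ℝ, 0 < r → 0 < deriv (Gfun N V) r) ∧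
    ∃ c : ℝ, 0 < c ∧ ∀ᶠ r in nhdsWithin (0 : ℝ) (Set.Ioi 0), c ≤ deriv (Gfun N V) r) ∧
  (4 ≤ N →
    (∃ c : ℝ, c < 0 ∧
      ∀ᶠ r in nhdsWithin (0 : ℝ) (Set.Ioi 0), r ^ 3 * deriv (Gfun N V) r ≤ c) ∧
    (∃! r₀ : ℝ, 0 < r₀ ∧ r₀ ^ 3 * deriv (Gfun N V) r₀ = 0) ∧
    (∀ r₀ : ℝ, 0 < r₀ → r₀ ^ 3 * deriv (Gfun N V) r₀ = 0 →
      deriv (fun r : ℝ => r ^ 3 * deriv (Gfun N V) r) r₀ ≠ 0))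

open Topology

section ImproperFTC

variable {E : Type*} [NormedAddCommGroup E] [NormedSpace ℝ E] [CompleteSpace E]
  {f f' : ℝ → E} {a b : ℝ}

theorem tendsto_nhdsGT_of_hasDerivAt_of_integrableOn (hab : a < b)
    (hderiv : ∀ x ∈ Ioc a b, HasDerivAt f (f' x) x) (hint : IntegrableOn f' (Ioc a b)) :
    Tendsto f (𝓝[>] a) (𝓝 (f b - ∫ x in a..b, f' x)) := by
  have hint' : IntegrableOn f' (uIcc a b) := by
    rw [uIcc_of_le hab.le]
    exact (integrableOn_Icc_iff_integrableOn_Ioc (f := f')).2 hint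
  have hprim := intervalIntegral.continuousOn_primitive_interval_left hint'
  rw [uIcc_of_le hab.le] at hprim
  have hlim : Tendsto (fun x => f b - ∫ t in x..b, f' t) (𝓝[>] a)
      (𝓝 (f b - ∫ t in a..b, f' t)) := by
    refine tendsto_const_nhds.sub ?_
    rw [← nhdsWithin_Ioo_eq_nhdsGT hab]
    exact (hprim a (left_mem_Icc.2 hab.le)).mono Ioo_subset_Icc_self
  refine hlim.congr' ?_
  filter_upwards [Ioo_mem_nhdsGT hab] with x hx
  have hsub : uIcc x b ⊆ Ioc a b := by
    rw [uIcc_of_le hx.2.le]; exact Icc_subset_Ioc_iff hx.2.le |>.2 ⟨hx.1, le_rfl⟩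
  rw [intervalIntegral.integral_eq_sub_of_hasDerivAt (fun y hy => hderiv y (hsub hy))
    ((intervalIntegrable_iff_integrableOn_Ioc_of_le hx.2.le).2
      (hint.mono_set (Ioc_subset_Ioc_left hx.1.le)))]
  abel

theorem integral_Ioi_of_hasDerivAt_of_tendsto_nhdsGT {la m : E}
    (hderiv : ∀ x ∈ Ioi a, HasDerivAt f (f' x) x) (hint : IntegrableOn f' (Ioi a))
    (ha : Tendsto f (𝓝[>] a) (𝓝 la)) (hm : Tendsto f atTop (𝓝 m)) :
    ∫ x in Ioi a, f' x = m - la := by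
  classical
  have hcont : ContinuousWithinAt (Function.update f a la) (Ici a) a := by
    rwa [continuousWithinAt_update_same, Ici_sdiff_left]
  have hderiv' : ∀ x ∈ Ioi a, HasDerivAt (Function.update f a la) (f' x) x := fun x hx =>
    (hderiv x hx).congr_of_eventuallyEq <| by
      filter_upwards [Ioi_mem_nhds hx] with y hy using Function.update_of_ne hy.ne' _ _
  have hm' : Tendsto (Function.update f a la) atTop (𝓝 m) := hm.congr' <| by
    filter_upwards [Ioi_mem_atTop a] with y hy using (Function.update_of_ne hy.ne' _ _).symm
  simpa using integral_Ioi_of_hasDerivAt_of_tendsto hcont hderiv' hint hm'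

end ImproperFTC

theorem eq_zero_of_tendsto_nhdsGT_of_sq_le {W g : ℝ → ℝ} {L : ℝ}
    (hW : Tendsto W (𝓝[>] 0) (𝓝 L)) (hg : IntegrableAtFilter g (𝓝[>] 0))
    (hle : ∀ᶠ r in 𝓝[>] 0, W r ^ 2 ≤ r * g r) : L = 0 := by
  by_contra hL
  obtain ⟨s, hs, hgs⟩ := hg
  have hL2 : 0 < L ^ 2 / 2 := by positivity
  have hWL : ∀ᶠ r in 𝓝[>] 0, L ^ 2 / 2 < W r ^ 2 :=
    (hW.pow 2).eventually (lt_mem_nhds (by linarith))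
  obtain ⟨δ, hδ, hδs⟩ := (nhdsGT_basis (0 : ℝ)).eventually_iff.1
    (((show ∀ᶠ r in 𝓝[>] (0 : ℝ), r ∈ s from hs).and hle).and (hWL.and self_mem_nhdsWithin))
  have hinv : IntegrableOn (fun r : ℝ => r⁻¹) (Ioo 0 δ) := by
    refine Integrable.mono' ((hgs.mono_set fun r hr => (hδs hr).1.1).const_mul (2 / L ^ 2))
      measurable_inv.aestronglyMeasurable ?_
    rw [ae_restrict_iff' measurableSet_Ioo]
    refine ae_of_all _ fun r hr => ?_
    obtain ⟨⟨-, hgr⟩, hWr, hr0 : 0 < r⟩ := hδs hr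
    rw [norm_inv, Real.norm_of_nonneg hr0.le, inv_le_iff_one_le_mul₀ hr0]
    calc (1 : ℝ) = 2 / L ^ 2 * (L ^ 2 / 2) := by field_simp
      _ ≤ 2 / L ^ 2 * (r * g r) := by gcongr; linarith
      _ = 2 / L ^ 2 * g r * r := by ring
  have := intervalIntegrable_inv_iff.1
    ((intervalIntegrable_iff_integrableOn_Ioo_of_le hδ.le).2 hinv)
  simp [hδ.ne, hδ.le] at this

def radialEnergy (n : ℕ) (u : ℝ → ℝ) (r : ℝ) : ℝ := r ^ n * (deriv u r ^ 2 + u r ^ 2)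

def radialWronskian (n : ℕ) (u v : ℝ → ℝ) (r : ℝ) : ℝ :=
  r ^ n * (u r * deriv v r - v r * deriv u r)

theorem hasDerivAt_radialWronskian {n : ℕ} {u v : ℝ → ℝ} {p q x : ℝ} (hx : x ≠ 0)
    (hu : ContDiffAt ℝ 2 u x) (hv : ContDiffAt ℝ 2 v x)
    (hu_ode : deriv (deriv u) x + n / x * deriv u x = p * u x)
    (hv_ode : deriv (deriv v) x + n / x * deriv v x = q * v x) :
    HasDerivAt (radialWronskian n u v) (x ^ n * ((q - p) * (u x * v x))) x := by
  have hd {f : ℝ → ℝ} (hf : ContDiffAt ℝ 2 f x) : HasDerivAt f (deriv f x) x ∧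
      HasDerivAt (deriv f) (deriv (deriv f) x) x :=
    ⟨(hf.differentiableAt (by norm_num)).hasDerivAt,
      ((hf.derivWithin (m := 1) (by norm_num)).differentiableAt one_ne_zero).hasDerivAt⟩
  have hweight : (n : ℝ) * x ^ (n - 1) = x ^ n * (n / x) := by
    rcases n with _ | k
    · simp
    · field_simp
      rw [Nat.add_sub_cancel, pow_succ]
  refine ((hasDerivAt_pow n x).mul
    (((hd hu).1.mul (hd hv).2).sub ((hd hv).1.mul (hd hu).2))).congr_deriv ?_
  simp only [Pi.sub_apply, Pi.mul_apply, hweight]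
  linear_combination (x ^ n * u x) * hv_ode - (x ^ n * v x) * hu_ode

theorem abs_radialWronskian_le (n : ℕ) (u v : ℝ → ℝ) {r : ℝ} (hr : 0 ≤ r) :
    |radialWronskian n u v r| ≤ radialEnergy n u r + radialEnergy n v r := by
  unfold radialWronskian radialEnergy
  rw [abs_mul, abs_of_nonneg (pow_nonneg hr n), ← mul_add]
  gcongr
  refine abs_le.2 ⟨?_, ?_⟩ <;>
    nlinarith [sq_nonneg (u r + deriv v r), sq_nonneg (u r - deriv v r),
      sq_nonneg (v r + deriv u r), sq_nonneg (v r - deriv u r)]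

theorem abs_pow_mul_mul_le (n : ℕ) (u v : ℝ → ℝ) {r : ℝ} (hr : 0 ≤ r) :
    |r ^ n * (u r * v r)| ≤ radialEnergy n u r + radialEnergy n v r := by
  unfold radialEnergy
  rw [abs_mul, abs_of_nonneg (pow_nonneg hr n), ← mul_add]
  gcongr
  refine abs_le.2 ⟨?_, ?_⟩ <;>
    nlinarith [sq_nonneg (u r + v r), sq_nonneg (u r - v r),
      sq_nonneg (deriv u r), sq_nonneg (deriv v r)]

section Integrability

variable {n : ℕ} {u v : ℝ → ℝ}

theorem integrableOn_radialWronskian (hu : ContDiffOn ℝ 1 u (Ioi 0))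
    (hv : ContDiffOn ℝ 1 v (Ioi 0)) (hEu : IntegrableOn (radialEnergy n u) (Ioi 0))
    (hEv : IntegrableOn (radialEnergy n v) (Ioi 0)) :
    IntegrableOn (radialWronskian n u v) (Ioi 0) := by
  have hcont : ContinuousOn (radialWronskian n u v) (Ioi 0) :=
    (continuous_pow n).continuousOn.mul
      ((hu.continuousOn.mul (hv.continuousOn_deriv_of_isOpen isOpen_Ioi le_rfl)).sub
        (hv.continuousOn.mul (hu.continuousOn_deriv_of_isOpen isOpen_Ioi le_rfl)))
  refine Integrable.mono' (hEu.add hEv) (hcont.aestronglyMeasurable measurableSet_Ioi)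
    (ae_restrict_of_forall_mem measurableSet_Ioi fun r hr => ?_)
  exact abs_radialWronskian_le n u v (le_of_lt hr)

theorem integrableOn_pow_mul_mul (hu : ContinuousOn u (Ioi 0)) (hv : ContinuousOn v (Ioi 0))
    (hEu : IntegrableOn (radialEnergy n u) (Ioi 0))
    (hEv : IntegrableOn (radialEnergy n v) (Ioi 0)) :
    IntegrableOn (fun r => r ^ n * (u r * v r)) (Ioi 0) := by
  refine Integrable.mono' (hEu.add hEv)
    (((continuous_pow n).continuousOn.mul (hu.mul hv)).aestronglyMeasurable measurableSet_Ioi)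
    (ae_restrict_of_forall_mem measurableSet_Ioi fun r hr => ?_)
  exact abs_pow_mul_mul_le n u v (le_of_lt hr)

end Integrability

theorem eventually_sq_radialWronskian_le {n : ℕ} {u v : ℝ → ℝ} (hn : 1 ≤ n)
    (hu : ContinuousWithinAt u (Ioi 0) 0) (hv : ContinuousWithinAt v (Ioi 0) 0) :
    ∃ B, ∀ᶠ r in 𝓝[>] 0,
      radialWronskian n u v r ^ 2 ≤ r * (B * (radialEnergy n u r + radialEnergy n v r)) := by
  set B := u 0 ^ 2 + v 0 ^ 2 + 1
  have hbdd : ∀ᶠ r in 𝓝[>] 0, u r ^ 2 + v r ^ 2 ≤ B :=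
    ((hu.pow 2).add (hv.pow 2)).eventually (ge_mem_nhds (lt_add_one _))
  refine ⟨B, ?_⟩
  filter_upwards [hbdd, Ioo_mem_nhdsGT one_pos] with r hB hr
  have hr0 : 0 ≤ r := hr.1.le
  have hrn : r ^ n ≤ r := pow_le_of_le_one hr0 hr.2.le (by omega)
  unfold radialWronskian radialEnergy
  calc (r ^ n * (u r * deriv v r - v r * deriv u r)) ^ 2
      = r ^ n * (r ^ n * (u r * deriv v r - v r * deriv u r) ^ 2) := by ring
    _ ≤ r * (r ^ n * ((u r ^ 2 + v r ^ 2) * (deriv u r ^ 2 + deriv v r ^ 2))) := by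
      gcongr
      nlinarith [sq_nonneg (u r * deriv u r + v r * deriv v r)]
    _ ≤ r * (r ^ n * (B * (deriv u r ^ 2 + deriv v r ^ 2))) := by
      gcongr
    _ ≤ r * (B * (r ^ n * (deriv u r ^ 2 + u r ^ 2) + r ^ n * (deriv v r ^ 2 + v r ^ 2))) := by
      rw [← mul_add, mul_left_comm (r ^ n)]
      gcongr <;> exact le_add_of_nonneg_right (sq_nonneg _)

theorem orthogonality_psi_w_general (N : ℕ) (hN : 2 ≤ N) (V : ℝ → ℝ)
    (w : ℝ → ℝ)
    (hwc : ContinuousOn w (Set.Ici 0))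
    (hwC2 : ContDiffOn ℝ 2 w (Set.Ioi 0))
    (hwode : ∀ r : ℝ, 0 < r →
      deriv (deriv w) r + ((N : ℝ) - 1) / r * deriv w r - V r * w r
        + w r * Real.log (w r ^ 2) = 0)
    (hwH1 : MeasureTheory.IntegrableOn
      (fun r : ℝ => r ^ (N - 1) * (deriv w r ^ 2 + w r ^ 2)) (Set.Ioi 0))
    (ψ : ℝ → ℝ)
    (hψ1 : ContDiffOn ℝ 1 ψ (Set.Ici 0))
    (hψ2 : ContDiffOn ℝ 2 ψ (Set.Ioi 0))
    (hψode : ∀ r : ℝ, 0 < r →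
      deriv (deriv ψ) r + ((N : ℝ) - 1) / r * deriv ψ r - V r * ψ r
        + (Real.log (w r ^ 2) + 2) * ψ r = 0)
    (hψH1 : MeasureTheory.IntegrableOn
      (fun r : ℝ => r ^ (N - 1) * (deriv ψ r ^ 2 + ψ r ^ 2)) (Set.Ioi 0)) :
    (∫ r in Set.Ioi (0 : ℝ), r ^ (N - 1) * (ψ r * w r)) = 0 := by
  have hn1 : 1 ≤ N - 1 := by omega
  set n := N - 1
  have hn : (n : ℝ) = N - 1 := by rw [Nat.cast_sub (by omega), Nat.cast_one]
  have hderiv : ∀ r ∈ Ioi (0 : ℝ),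
      HasDerivAt (radialWronskian n ψ w) (2 * (r ^ n * (ψ r * w r))) r := fun r hr =>
    (hasDerivAt_radialWronskian (p := V r - (log (w r ^ 2) + 2)) (q := V r - log (w r ^ 2))
      hr.ne' (hψ2.contDiffAt (Ioi_mem_nhds hr)) (hwC2.contDiffAt (Ioi_mem_nhds hr))
      (by rw [hn]; linarith [hψode r hr]) (by rw [hn]; linarith [hwode r hr])).congr_deriv
      (by ring)
  have hψC1 : ContDiffOn ℝ 1 ψ (Ioi 0) := hψ2.of_le (by norm_num)
  have hwC1 : ContDiffOn ℝ 1 w (Ioi 0) := hwC2.of_le (by norm_num)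
  have hint : IntegrableOn (fun r => 2 * (r ^ n * (ψ r * w r))) (Ioi 0) :=
    (integrableOn_pow_mul_mul hψC1.continuousOn hwC1.continuousOn hψH1 hwH1).const_mul 2
  have htop : Tendsto (radialWronskian n ψ w) atTop (𝓝 0) :=
    tendsto_zero_of_hasDerivAt_of_integrableOn_Ioi hderiv hint
      (integrableOn_radialWronskian hψC1 hwC1 hψH1 hwH1)
  have hzero : Tendsto (radialWronskian n ψ w) (𝓝[>] 0) (𝓝 0) := by
    have hlim := tendsto_nhdsGT_of_hasDerivAt_of_integrableOn one_pos
      (fun r hr => hderiv r hr.1) (hint.mono_set Ioc_subset_Ioi_self)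
    obtain ⟨B, hB⟩ := eventually_sq_radialWronskian_le hn1
      ((hψ1.continuousOn 0 self_mem_Ici).mono Ioi_subset_Ici_self)
      ((hwc 0 self_mem_Ici).mono Ioi_subset_Ici_self)
    rwa [eq_zero_of_tendsto_nhdsGT_of_sq_le hlim
      ⟨Ioi 0, self_mem_nhdsWithin, (hψH1.add hwH1).const_mul B⟩ hB] at hlim
  have hFTC := integral_Ioi_of_hasDerivAt_of_tendsto_nhdsGT hderiv hint hzero htop
  rw [integral_const_mul, sub_self] at hFTC
  simpa using hFTC

/-- Assume (V1) and (V2), let `w` be the unique positive radial `H¹` solution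
of the logarithmic equation, and let `ψ` be an `H¹` radial solution of the linearized
equation. Then `∫_0^∞ r^{N-1} ψ(r) w(r) dr = 0`, i.e. `ψ ⊥ w` in `L²(r^{N-1}dr)`. -/
theorem orthogonality_psi_w (N : ℕ) (hN : 2 ≤ N) (V : ℝ → ℝ)
    (hV1 : CondV1 N V) (hV2 : CondV2 N V)
    (w : ℝ → ℝ)
    (hwc : ContinuousOn w (Set.Ici 0))
    (hwC2 : ContDiffOn ℝ 2 w (Set.Ioi 0))
    (hw0 : HasDerivWithinAt w 0 (Set.Ici 0) 0)
    (hwode : ∀ r : ℝ, 0 < r →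
      deriv (deriv w) r + ((N : ℝ) - 1) / r * deriv w r - V r * w r
        + w r * Real.log (w r ^ 2) = 0)
    (hwpos : ∀ r : ℝ, 0 < r → 0 < w r)
    (hwH1 : MeasureTheory.IntegrableOn
      (fun r : ℝ => r ^ (N - 1) * (deriv w r ^ 2 + w r ^ 2)) (Set.Ioi 0))
    (ψ : ℝ → ℝ)
    (hψ1 : ContDiffOn ℝ 1 ψ (Set.Ici 0))
    (hψ2 : ContDiffOn ℝ 2 ψ (Set.Ioi 0))
    (hψ0 : derivWithin ψ (Set.Ici 0) 0 = 0)
    (hψode : ∀ r : ℝ, 0 < r →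
      deriv (deriv ψ) r + ((N : ℝ) - 1) / r * deriv ψ r - V r * ψ r
        + (Real.log (w r ^ 2) + 2) * ψ r = 0)
    (hψH1 : MeasureTheory.IntegrableOn
      (fun r : ℝ => r ^ (N - 1) * (deriv ψ r ^ 2 + ψ r ^ 2)) (Set.Ioi 0)) :
    (∫ r in Set.Ioi (0 : ℝ), r ^ (N - 1) * (ψ r * w r)) = 0 :=
  orthogonality_psi_w_general N hN V w hwc hwC2 hwode hwH1 ψ hψ1 hψ2 hψode hψH1
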